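/- Let n ≥ 4 and μ₁ ∈ ℝ with μ₁⁻ := max(−μ₁, 0). Suppose that for each j a C¹ function b_j : [0,1] → ℝ satisfies b_j(0) = b_j(1) = 0, and let Q := Σ_j ∫₀¹ (t^{n−2} b_j'(t)² + t^{n−4} μ_j b_j(t)²) dt with all μ_j ≥ μ₁ (finitely many j nonzero). Then Q ≥ (1 − 4μ₁⁻/(n−3)²) · Σ_j ∫₀¹ t^{n−2} b_j'(t)² dt. -/

import Mathlib

open MeasureTheory

lemma aux_cont_rpow (c : ℝ) (hc : 0 ≤ c) : Continuous fun t : ℝ => t ^ c :=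
  continuous_iff_continuousAt.mpr fun x => Real.continuousAt_rpow_const x c (Or.inr hc)

lemma aux_intOn (c : ℝ) (hc : 0 ≤ c) (F : ℝ → ℝ) (hF : ContinuousOn F (Set.Icc 0 1)) :
    IntegrableOn (fun t => t ^ c * F t) (Set.Ioc (0:ℝ) 1) := by
  obtain ⟨C, hC⟩ := isCompact_Icc.exists_bound_of_continuousOn hF
  refine ⟨(((aux_cont_rpow c hc).continuousOn).mul
      (hF.mono Set.Ioc_subset_Icc_self)).aestronglyMeasurable measurableSet_Ioc,
    HasFiniteIntegral.restrict_of_bounded (C := C) measure_Ioc_lt_top ?_⟩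
  filter_upwards [ae_restrict_mem measurableSet_Ioc] with t ht
  have h1 : |t ^ c| ≤ 1 := by
    rw [abs_of_nonneg (Real.rpow_nonneg ht.1.le c)]
    exact Real.rpow_le_one ht.1.le ht.2 hc
  have h2 : ‖F t‖ ≤ C := hC t ⟨ht.1.le, ht.2⟩
  calc ‖t ^ c * F t‖ = |t ^ c| * ‖F t‖ := by rw [norm_mul]; rfl
    _ ≤ 1 * C := mul_le_mul h1 h2 (norm_nonneg _) zero_le_one
    _ = C := one_mul C

/-- Hardy inequality. -/
lemma aux_hardy (n : ℕ) (hn : 4 ≤ n) (f f' : ℝ → ℝ)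
    (hd : ∀ t ∈ Set.Icc (0:ℝ) 1, HasDerivAt f (f' t) t)
    (hf' : ContinuousOn f' (Set.Icc 0 1))
    (h0 : f 0 = 0) (h1 : f 1 = 0) :
    ∫ t in Set.Ioc (0:ℝ) 1, t ^ ((n:ℝ) - 4) * f t ^ 2
      ≤ 4 / ((n:ℝ) - 3) ^ 2 * ∫ t in Set.Ioc (0:ℝ) 1, t ^ ((n:ℝ) - 2) * f' t ^ 2 := by
  have hn3 : (0:ℝ) < (n:ℝ) - 3 := by
    have : (4:ℝ) ≤ n := by exact_mod_cast hn
    linarith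
  have h4' : (0:ℝ) ≤ (n:ℝ) - 4 := by
    have : (4:ℝ) ≤ n := by exact_mod_cast hn
    linarith
  have hfc : ContinuousOn f (Set.Icc 0 1) :=
    fun t ht => ((hd t ht).continuousAt).continuousWithinAt
  set k : ℝ := ((n:ℝ) - 3) / 2 with hk
  have hkpos : 0 < k := by positivity
  -- the function g and its derivative h
  set g : ℝ → ℝ := fun t => t ^ ((n:ℝ) - 3) * f t ^ 2 with hg
  set h : ℝ → ℝ := fun t => t ^ ((n:ℝ) - 4) * (((n:ℝ) - 3) * f t ^ 2)
      + t ^ ((n:ℝ) - 3) * (2 * f t * f' t) with hh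
  have hgd : ∀ t ∈ Set.Ioo (0:ℝ) 1, HasDerivAt g (h t) t := by
    intro t ht
    have h1' : HasDerivAt (fun t : ℝ => t ^ ((n:ℝ) - 3))
        (((n:ℝ) - 3) * t ^ ((n:ℝ) - 3 - 1)) t :=
      Real.hasDerivAt_rpow_const (Or.inl (ne_of_gt ht.1))
    have h2' : HasDerivAt (fun t => f t ^ 2) (2 * f t * f' t) t := by
      have := (hd t ⟨ht.1.le, ht.2.le⟩).fun_pow 2
      simpa [mul_comm, mul_assoc, mul_left_comm] using this
    have := h1'.fun_mul h2'
    have he : (n:ℝ) - 3 - 1 = (n:ℝ) - 4 := by ring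
    rw [he] at this
    exact this.congr_deriv (by simp only [hh]; ring)
  -- integrability pieces
  have hA : IntegrableOn (fun t => t ^ ((n:ℝ) - 4) * f t ^ 2) (Set.Ioc (0:ℝ) 1) := by
    have h4 : (0:ℝ) ≤ (n:ℝ) - 4 := by
      have : (4:ℝ) ≤ n := by exact_mod_cast hn
      linarith
    exact aux_intOn _ h4 _ (hfc.pow 2)
  have hC : IntegrableOn (fun t => t ^ ((n:ℝ) - 2) * f' t ^ 2) (Set.Ioc (0:ℝ) 1) := by
    have h2 : (0:ℝ) ≤ (n:ℝ) - 2 := by linarith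
    exact aux_intOn _ h2 _ (hf'.pow 2)
  have hHint : IntegrableOn h (Set.Ioc (0:ℝ) 1) := by
    apply Integrable.add
    · exact aux_intOn _ (by linarith) _ (ContinuousOn.mul continuousOn_const (hfc.pow 2))
    · exact aux_intOn _ hn3.le _
        (ContinuousOn.mul (ContinuousOn.mul continuousOn_const hfc) hf')
  -- FTC: ∫ h = g 1 - g 0 = 0
  have hint0 : ∫ t in Set.Ioc (0:ℝ) 1, h t = 0 := by
    have hcont : ContinuousOn g (Set.Icc 0 1) :=
      ((aux_cont_rpow _ hn3.le).continuousOn).mul (hfc.pow 2)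
    have := intervalIntegral.integral_eq_sub_of_hasDeriv_right_of_le (f := g) (f' := h)
      zero_le_one hcont (fun x hx => (hgd x hx).hasDerivWithinAt)
      ((intervalIntegrable_iff_integrableOn_Ioc_of_le zero_le_one).mpr hHint)
    rw [intervalIntegral.integral_of_le zero_le_one] at this
    rw [this]
    simp [hg, h0, h1, Real.zero_rpow (ne_of_gt hn3)]
  -- pointwise inequality
  have hpt : ∀ t ∈ Set.Ioc (0:ℝ) 1,
      k * (t ^ ((n:ℝ) - 4) * f t ^ 2) - (1 / k) * (t ^ ((n:ℝ) - 2) * f' t ^ 2) ≤ h t := by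
    intro t ht
    have htp : (0:ℝ) < t := ht.1
    set a : ℝ := t ^ (((n:ℝ) - 4) / 2) * f t with ha
    set c : ℝ := t ^ (((n:ℝ) - 2) / 2) * f' t with hc
    have e1 : t ^ ((n:ℝ) - 4) * f t ^ 2 = a ^ 2 := by
      rw [ha, mul_pow, ← Real.rpow_natCast (t ^ (((n:ℝ) - 4)/2)) 2,
        ← Real.rpow_mul htp.le]
      norm_num
    have e2 : t ^ ((n:ℝ) - 2) * f' t ^ 2 = c ^ 2 := by
      rw [hc, mul_pow, ← Real.rpow_natCast (t ^ (((n:ℝ) - 2)/2)) 2,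
        ← Real.rpow_mul htp.le]
      norm_num
    have e3 : t ^ ((n:ℝ) - 3) * (f t * f' t) = a * c := by
      rw [ha, hc]
      rw [show t ^ (((n:ℝ) - 4)/2) * f t * (t ^ (((n:ℝ) - 2)/2) * f' t)
        = t ^ (((n:ℝ) - 4)/2) * t ^ (((n:ℝ) - 2)/2) * (f t * f' t) by ring,
        ← Real.rpow_add htp]
      norm_num
      left
      ring_nf
    have hhval : h t = 2 * k * a ^ 2 + 2 * (a * c) := by
      rw [hh]
      simp only
      rw [show t ^ ((n:ℝ) - 4) * (((n:ℝ) - 3) * f t ^ 2)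
          = ((n:ℝ) - 3) * (t ^ ((n:ℝ) - 4) * f t ^ 2) by ring, e1,
        show t ^ ((n:ℝ) - 3) * (2 * f t * f' t)
          = 2 * (t ^ ((n:ℝ) - 3) * (f t * f' t)) by ring, e3, hk]
      ring
    rw [hhval, e1, e2]
    have key : 0 ≤ (1/k) * (k * a + c) ^ 2 := by positivity
    have hk0 : k ≠ 0 := ne_of_gt hkpos
    have keyexp : (1/k) * (k * a + c) ^ 2 = k * a ^ 2 + 2 * (a * c) + (1/k) * c ^ 2 := by
      field_simp; ring
    rw [keyexp] at key
    linarith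
  -- integrate the pointwise inequality
  have hmono : ∫ t in Set.Ioc (0:ℝ) 1,
      (k * (t ^ ((n:ℝ) - 4) * f t ^ 2) - (1 / k) * (t ^ ((n:ℝ) - 2) * f' t ^ 2))
      ≤ ∫ t in Set.Ioc (0:ℝ) 1, h t := by
    apply setIntegral_mono_on ((hA.const_mul k).sub (hC.const_mul (1/k))) hHint
      measurableSet_Ioc hpt
  rw [hint0, integral_sub (hA.const_mul k) (hC.const_mul (1/k)),
    integral_const_mul, integral_const_mul] at hmono
  have hX : k * ∫ t in Set.Ioc (0:ℝ) 1, t ^ ((n:ℝ) - 4) * f t ^ 2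
      ≤ (1/k) * ∫ t in Set.Ioc (0:ℝ) 1, t ^ ((n:ℝ) - 2) * f' t ^ 2 := by linarith
  have h4k : 4 / ((n:ℝ) - 3) ^ 2 = (1/k) * (1/k) := by
    rw [hk]; field_simp; ring
  rw [h4k]
  calc ∫ t in Set.Ioc (0:ℝ) 1, t ^ ((n:ℝ) - 4) * f t ^ 2
      = (1/k) * (k * ∫ t in Set.Ioc (0:ℝ) 1, t ^ ((n:ℝ) - 4) * f t ^ 2) := by
        field_simp
    _ ≤ (1/k) * ((1/k) * ∫ t in Set.Ioc (0:ℝ) 1, t ^ ((n:ℝ) - 2) * f' t ^ 2) := by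
        apply mul_le_mul_of_nonneg_left hX (by positivity)
    _ = (1/k) * (1/k) * ∫ t in Set.Ioc (0:ℝ) 1, t ^ ((n:ℝ) - 2) * f' t ^ 2 := by ring

/-- The second-variation quadratic form `Q = Σ_j ∫₀¹ (t^{n−2}(b_j')² + t^{n−4} μ_j b_j²) dt`
with all `μ_j ≥ μ₁` satisfies `Q ≥ (1 − 4μ₁⁻/(n−3)²)·Σ_j ∫₀¹ t^{n−2}(b_j')² dt`. -/
theorem stmt_9 (n : ℕ) (hn : 4 ≤ n) (μ₁ : ℝ) (s : Finset ℕ)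
    (μs : ℕ → ℝ) (hμs : ∀ j, μ₁ ≤ μs j)
    (b b' : ℕ → ℝ → ℝ)
    (hd : ∀ j, ∀ t ∈ Set.Icc (0 : ℝ) 1, HasDerivAt (b j) (b' j t) t)
    (hb' : ∀ j, ContinuousOn (b' j) (Set.Icc 0 1))
    (h0 : ∀ j, b j 0 = 0) (h1 : ∀ j, b j 1 = 0) :
    (1 - 4 * max (-μ₁) 0 / ((n : ℝ) - 3) ^ 2) *
        ∑ j ∈ s, ∫ t in Set.Ioc (0 : ℝ) 1, t ^ ((n : ℝ) - 2) * (b' j t) ^ 2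
      ≤ ∑ j ∈ s, ∫ t in Set.Ioc (0 : ℝ) 1,
          (t ^ ((n : ℝ) - 2) * (b' j t) ^ 2 + t ^ ((n : ℝ) - 4) * μs j * (b j t) ^ 2) := by
  have hn3 : (0:ℝ) < (n:ℝ) - 3 := by
    have : (4:ℝ) ≤ n := by exact_mod_cast hn
    linarith
  have h4 : (0:ℝ) ≤ (n:ℝ) - 4 := by
    have : (4:ℝ) ≤ n := by exact_mod_cast hn
    linarith
  set m := max (-μ₁) 0 with hm
  have hm0 : 0 ≤ m := le_max_right _ _
  have hmμ : -m ≤ μ₁ := by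
    have := le_max_left (-μ₁) 0
    linarith
  rw [Finset.mul_sum]
  apply Finset.sum_le_sum
  intro j _
  have hfc : ContinuousOn (b j) (Set.Icc 0 1) :=
    fun t ht => ((hd j t ht).continuousAt).continuousWithinAt
  have hC : IntegrableOn (fun t => t ^ ((n:ℝ) - 2) * (b' j t) ^ 2) (Set.Ioc (0:ℝ) 1) :=
    aux_intOn _ (by linarith) _ ((hb' j).pow 2)
  have hA : IntegrableOn (fun t => t ^ ((n:ℝ) - 4) * μs j * (b j t) ^ 2) (Set.Ioc (0:ℝ) 1) := by
    have := aux_intOn ((n:ℝ) - 4) h4 (fun t => μs j * (b j t) ^ 2)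
      (ContinuousOn.mul continuousOn_const (hfc.pow 2))
    apply this.congr_fun (fun t _ => by ring) measurableSet_Ioc
  rw [integral_add hC hA]
  set Y := ∫ t in Set.Ioc (0:ℝ) 1, t ^ ((n:ℝ) - 2) * (b' j t) ^ 2 with hY
  have hXsplit : ∫ t in Set.Ioc (0:ℝ) 1, t ^ ((n:ℝ) - 4) * μs j * (b j t) ^ 2
      = μs j * ∫ t in Set.Ioc (0:ℝ) 1, t ^ ((n:ℝ) - 4) * (b j t) ^ 2 := by
    rw [← integral_const_mul]
    congr 1; ext t; ring
  rw [hXsplit]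
  set X := ∫ t in Set.Ioc (0:ℝ) 1, t ^ ((n:ℝ) - 4) * (b j t) ^ 2 with hXdef
  have hX0 : 0 ≤ X := by
    apply setIntegral_nonneg measurableSet_Ioc
    intro t ht
    have : (0:ℝ) ≤ t ^ ((n:ℝ) - 4) := Real.rpow_nonneg ht.1.le _
    positivity
  have hY0 : 0 ≤ Y := by
    apply setIntegral_nonneg measurableSet_Ioc
    intro t ht
    have : (0:ℝ) ≤ t ^ ((n:ℝ) - 2) := Real.rpow_nonneg ht.1.le _
    positivity
  have hhardy : X ≤ 4 / ((n:ℝ) - 3) ^ 2 * Y :=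
    aux_hardy n hn (b j) (b' j) (hd j) (hb' j) (h0 j) (h1 j)
  have hμj : -m ≤ μs j := le_trans hmμ (hμs j)
  -- goal: (1 - 4*m/(n-3)^2) * Y ≤ Y + μs j * X
  have key : m * X ≤ m * (4 / ((n:ℝ) - 3) ^ 2 * Y) := mul_le_mul_of_nonneg_left hhardy hm0
  have key2 : (-m) * X ≤ μs j * X := mul_le_mul_of_nonneg_right hμj hX0
  have hgoal : (1 - 4 * m / ((n:ℝ) - 3) ^ 2) * Y = Y - m * (4 / ((n:ℝ) - 3) ^ 2 * Y) := by
    ring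
  rw [hgoal]
  linarith [key, key2]
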